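/- arXiv:2411.17896 — 2 statements merged into one kernel-verified Lean document; each statement's English description precedes it below -/
import Mathlib

section
/- Let p ∈ [0,1], λ ∈ (0,1), E a linear subspace of ℝⁿ, A, C origin-symmetric convex bodies in E, and B, D origin-symmetric convex bodies in E^⊥. Then (1-λ)·(A+B) +_p λ·(C+D) = ((1-λ)·A +_p λ·C) + ((1-λ)·B +_p λ·D), where the L_p-sums on the right are taken inside E and E^⊥ respectively. -/
open MeasureTheory Metric Matrix
open scoped RealInnerProductSpace Pointwise

noncomputable section

abbrev Euc (n : ℕ) := EuclideanSpace ℝ (Fin n)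

/-- The support function of a set `K ⊆ ℝⁿ`. -/
def suppFn {n : ℕ} (K : Set (Euc n)) (x : Euc n) : ℝ :=
  sSup ((fun y => ⟪x, y⟫) '' K)

/-- `κ_d`, the volume of the `d`-dimensional Euclidean unit ball. -/
def kappa (d : ℕ) : ℝ := (volume (ball (0 : Euc d) 1)).toReal

/-- The `(n-1)`-dimensional Hausdorff measure on the unit sphere. -/
def sphM (n : ℕ) : Measure (Euc n) := (μH[(n : ℝ) - 1]).restrict (sphere (0 : Euc n) 1)

/-- The Wulff shape of `f`: the largest convex body whose support function is dominated by `f`. -/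
def wulff {n : ℕ} (f : Euc n → ℝ) : Set (Euc n) :=
  {x | ∀ u : Euc n, ‖u‖ = 1 → ⟪x, u⟫ ≤ f u}

/-- The `p`-combination `((1-λ)a^p + λb^p)^{1/p}` (geometric mean for `p = 0`). -/
def combP (p lam a b : ℝ) : ℝ :=
  if p = 0 then a ^ (1 - lam) * b ^ lam
  else ((1 - lam) * a ^ p + lam * b ^ p) ^ (1 / p)

/-- The Hessian matrix (in the standard coordinates of `ℝⁿ`) of `h : ℝⁿ → ℝ` at `u`. -/
def hessMat {n : ℕ} (h : Euc n → ℝ) (u : Euc n) : Matrix (Fin n) (Fin n) ℝ :=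
  Matrix.of fun i k =>
    fderiv ℝ (fun x => fderiv ℝ h x (EuclideanSpace.single k 1)) u (EuclideanSpace.single i 1)

/-- `s_j`: the normalized `j`-th elementary symmetric function of the principal radii of
curvature (for a 1-homogeneous `h`, the `j`-th elementary symmetric function of the eigenvalues
of the full Hessian at `u`, read off the characteristic polynomial). -/
def sjFun (n j : ℕ) (h : Euc n → ℝ) (u : Euc n) : ℝ :=
  (((n - 1).choose j : ℝ))⁻¹ * ((-1 : ℝ) ^ j * ((hessMat h u).charpoly.coeff (n - j)))

/-- A function `V : ℕ → Set ℝⁿ → ℝ` realizes the intrinsic volumes via the Steiner formula. -/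
def steiner (n : ℕ) (V : ℕ → Set (Euc n) → ℝ) : Prop :=
  ∀ K : Set (Euc n), IsCompact K → Convex ℝ K → K.Nonempty → ∀ ρ : ℝ, 0 < ρ →
    (volume (K + closedBall (0 : Euc n) ρ)).toReal
      = ∑ i ∈ Finset.range (n + 1), ρ ^ (n - i) * kappa (n - i) * V i K

/-- The `L_p`-sum taken inside a subspace `E`: the largest convex body of `E` whose support
function (on unit vectors of `E`) is dominated by the given function. -/
def wulffIn {n : ℕ} (E : Submodule ℝ (Euc n)) (f : Euc n → ℝ) : Set (Euc n) :=
  {x | x ∈ E ∧ ∀ u ∈ E, ‖u‖ = 1 → ⟪x, u⟫ ≤ f u}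

section helper

variable {n : ℕ}

lemma suppFn_bddAbove {K : Set (Euc n)} (hK : IsCompact K) (u : Euc n) :
    BddAbove ((fun y => ⟪u, y⟫) '' K) :=
  (hK.image (continuous_const.inner continuous_id)).bddAbove

lemma zero_mem_of_symm {K : Set (Euc n)} (hcv : Convex ℝ K) (hs : ∀ x ∈ K, -x ∈ K)
    (hne : K.Nonempty) : (0 : Euc n) ∈ K := by
  obtain ⟨x, hx⟩ := hne
  have h := hcv hx (hs x hx) (by norm_num : (0:ℝ) ≤ 1/2) (by norm_num : (0:ℝ) ≤ 1/2)
    (by norm_num)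
  simpa [smul_neg] using h

lemma suppFn_nonneg {K : Set (Euc n)} (hK : IsCompact K) (h0 : (0:Euc n) ∈ K) (u : Euc n) :
    0 ≤ suppFn K u :=
  le_csSup (suppFn_bddAbove hK u) ⟨0, h0, by simp⟩

lemma suppFn_congr' {K : Set (Euc n)} {u v : Euc n} (h : ∀ y ∈ K, ⟪u, y⟫ = ⟪v, y⟫) :
    suppFn K u = suppFn K v := by
  unfold suppFn; rw [Set.image_congr h]

lemma suppFn_eq_zero {K : Set (Euc n)} (hne : K.Nonempty) {u : Euc n}
    (h : ∀ y ∈ K, ⟪u, y⟫ = 0) : suppFn K u = 0 := by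
  unfold suppFn
  have himg : (fun y => ⟪u, y⟫) '' K = {0} := by
    apply Set.eq_singleton_iff_nonempty_unique_mem.mpr
    refine ⟨hne.image _, ?_⟩
    rintro z ⟨y, hy, rfl⟩
    exact h y hy
  rw [himg, csSup_singleton]

lemma mul_csSup' {t : ℝ} (ht : 0 ≤ t) {S : Set ℝ} (hS : S.Nonempty) (bS : BddAbove S) :
    sSup ((fun r => t * r) '' S) = t * sSup S := by
  rcases eq_or_lt_of_le ht with rfl | htpos
  · have : (fun r => (0:ℝ) * r) '' S = {0} := by
      apply Set.eq_singleton_iff_nonempty_unique_mem.mpr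
      exact ⟨hS.image _, by rintro z ⟨x, hx, rfl⟩; simp⟩
    rw [this, csSup_singleton, zero_mul]
  · have bimg : BddAbove ((fun r => t * r) '' S) := by
      obtain ⟨M, hM⟩ := bS
      refine ⟨t * M, ?_⟩
      rintro z ⟨x, hx, rfl⟩
      exact mul_le_mul_of_nonneg_left (hM hx) htpos.le
    apply le_antisymm
    · apply csSup_le (hS.image _)
      rintro z ⟨x, hx, rfl⟩
      exact mul_le_mul_of_nonneg_left (le_csSup bS hx) htpos.le
    · rw [mul_comm, ← le_div_iff₀ htpos]
      apply csSup_le hS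
      intro x hx
      rw [le_div_iff₀ htpos, mul_comm]
      exact le_csSup bimg ⟨x, hx, rfl⟩

lemma suppFn_zero_vec {K : Set (Euc n)} (hne : K.Nonempty) : suppFn K (0 : Euc n) = 0 :=
  suppFn_eq_zero hne fun y _ => inner_zero_left y

lemma suppFn_smul {K : Set (Euc n)} (hK : IsCompact K) (hne : K.Nonempty) {t : ℝ}
    (ht : 0 ≤ t) (u : Euc n) : suppFn K (t • u) = t * suppFn K u := by
  unfold suppFn
  rw [show (fun y : Euc n => ⟪t • u, y⟫) = (fun r => t * r) ∘ (fun y : Euc n => ⟪u, y⟫)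
      from funext fun y => real_inner_smul_left u y t,
    Set.image_comp, mul_csSup' ht (hne.image _) (suppFn_bddAbove hK u)]

lemma suppFn_add_eq {K L : Set (Euc n)} (hKcp : IsCompact K) (hLcp : IsCompact L)
    (hKne : K.Nonempty) (hLne : L.Nonempty) (u : Euc n) :
    suppFn (K + L) u = suppFn K u + suppFn L u := by
  unfold suppFn
  have h1 : (fun y => ⟪u, y⟫) '' (K + L)
      = ((fun y => ⟪u, y⟫) '' K) + ((fun y => ⟪u, y⟫) '' L) := by
    ext z
    simp only [Set.mem_image, Set.mem_add]
    constructor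
    · rintro ⟨y, ⟨a, ha, b, hb, rfl⟩, rfl⟩
      exact ⟨⟪u, a⟫, ⟨a, ha, rfl⟩, ⟪u, b⟫, ⟨b, hb, rfl⟩, (inner_add_right u a b).symm⟩
    · rintro ⟨z1, ⟨a, ha, rfl⟩, z2, ⟨b, hb, rfl⟩, rfl⟩
      exact ⟨a + b, ⟨a, ha, b, hb, rfl⟩, inner_add_right u a b⟩
  rw [h1, csSup_add (hKne.image _) (suppFn_bddAbove hKcp u) (hLne.image _)
    (suppFn_bddAbove hLcp u)]

end helper

section combPlemmas

variable {p lam a b : ℝ}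

lemma combP_nonneg (hl : lam ∈ Set.Ioo (0:ℝ) 1) (ha : 0 ≤ a) (hb : 0 ≤ b) :
    0 ≤ combP p lam a b := by
  unfold combP
  split_ifs with h
  · exact mul_nonneg (Real.rpow_nonneg ha _) (Real.rpow_nonneg hb _)
  · exact Real.rpow_nonneg
      (add_nonneg (mul_nonneg (by linarith [hl.2]) (Real.rpow_nonneg ha _))
        (mul_nonneg hl.1.le (Real.rpow_nonneg hb _))) _

lemma combP_zero (hl : lam ∈ Set.Ioo (0:ℝ) 1) : combP p lam 0 0 = 0 := by
  unfold combP
  split_ifs with h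
  · rw [Real.zero_rpow (by linarith [hl.2] : (1:ℝ) - lam ≠ 0), zero_mul]
  · rw [Real.zero_rpow h, mul_zero, mul_zero, add_zero,
      Real.zero_rpow (one_div_ne_zero h)]

lemma combP_smul (hl : lam ∈ Set.Ioo (0:ℝ) 1) {t : ℝ} (ht : 0 ≤ t)
    (ha : 0 ≤ a) (hb : 0 ≤ b) :
    combP p lam (t * a) (t * b) = t * combP p lam a b := by
  unfold combP
  split_ifs with h
  · rw [Real.mul_rpow ht ha, Real.mul_rpow ht hb]
    have h1 : t ^ (1 - lam) * t ^ lam = t := by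
      rw [← Real.rpow_add' ht (by norm_num : (1:ℝ) - lam + lam ≠ 0), sub_add_cancel,
        Real.rpow_one]
    calc t ^ (1 - lam) * a ^ (1 - lam) * (t ^ lam * b ^ lam)
        = (t ^ (1 - lam) * t ^ lam) * (a ^ (1 - lam) * b ^ lam) := by ring
      _ = t * (a ^ (1 - lam) * b ^ lam) := by rw [h1]
  · have hin : 0 ≤ (1 - lam) * a ^ p + lam * b ^ p :=
      add_nonneg (mul_nonneg (by linarith [hl.2]) (Real.rpow_nonneg ha _))
        (mul_nonneg hl.1.le (Real.rpow_nonneg hb _))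
    rw [Real.mul_rpow ht ha, Real.mul_rpow ht hb,
      show (1 - lam) * (t ^ p * a ^ p) + lam * (t ^ p * b ^ p)
        = t ^ p * ((1 - lam) * a ^ p + lam * b ^ p) by ring,
      Real.mul_rpow (Real.rpow_nonneg ht _) hin, ← Real.rpow_mul ht,
      mul_one_div, div_self h, Real.rpow_one]

lemma combP_superadd {a1 b1 a2 b2 : ℝ} (hp : p ∈ Set.Icc (0:ℝ) 1)
    (hl : lam ∈ Set.Ioo (0:ℝ) 1)
    (ha1 : 0 ≤ a1) (hb1 : 0 ≤ b1) (ha2 : 0 ≤ a2) (hb2 : 0 ≤ b2) :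
    combP p lam a1 b1 + combP p lam a2 b2 ≤ combP p lam (a1 + a2) (b1 + b2) := by
  obtain ⟨hl0, hl1⟩ := hl
  have hw : (0:ℝ) ≤ 1 - lam := by linarith
  unfold combP
  split_ifs with h
  -- p = 0 : geometric means
  · by_cases hA : a1 + a2 = 0
    · have h1 : a1 = 0 := by linarith
      have h2 : a2 = 0 := by linarith
      simp [h1, h2, hA, Real.zero_rpow (by linarith : (1:ℝ) - lam ≠ 0)]
    by_cases hB : b1 + b2 = 0
    · have h1 : b1 = 0 := by linarith
      have h2 : b2 = 0 := by linarith
      simp [h1, h2, hB, Real.zero_rpow (by linarith : lam ≠ 0)]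
    have hA' : 0 < a1 + a2 := lt_of_le_of_ne (by linarith) (Ne.symm hA)
    have hB' : 0 < b1 + b2 := lt_of_le_of_ne (by linarith) (Ne.symm hB)
    set F : ℝ := (a1 + a2) ^ (1 - lam) * (b1 + b2) ^ lam with hF
    have hFnn : 0 ≤ F := mul_nonneg (Real.rpow_nonneg hA'.le _) (Real.rpow_nonneg hB'.le _)
    have key : ∀ x y : ℝ, 0 ≤ x → 0 ≤ y →
        x ^ (1 - lam) * y ^ lam
          ≤ F * ((1 - lam) * (x / (a1 + a2)) + lam * (y / (b1 + b2))) := by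
      intro x y hx hy
      have hgm := Real.geom_mean_le_arith_mean2_weighted hw hl0.le
        (div_nonneg hx hA'.le) (div_nonneg hy hB'.le) (by ring)
      have heq : x ^ (1 - lam) * y ^ lam
          = F * ((x / (a1 + a2)) ^ (1 - lam) * (y / (b1 + b2)) ^ lam) := by
        rw [Real.div_rpow hx hA'.le, Real.div_rpow hy hB'.le, hF]
        have h1 : (a1 + a2) ^ (1 - lam) ≠ 0 := (Real.rpow_pos_of_pos hA' _).ne'
        have h2 : (b1 + b2) ^ lam ≠ 0 := (Real.rpow_pos_of_pos hB' _).ne'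
        field_simp
      rw [heq]
      exact mul_le_mul_of_nonneg_left hgm hFnn
    calc a1 ^ (1 - lam) * b1 ^ lam + a2 ^ (1 - lam) * b2 ^ lam
        ≤ F * ((1 - lam) * (a1 / (a1 + a2)) + lam * (b1 / (b1 + b2)))
          + F * ((1 - lam) * (a2 / (a1 + a2)) + lam * (b2 / (b1 + b2))) :=
            add_le_add (key a1 b1 ha1 hb1) (key a2 b2 ha2 hb2)
      _ = F * ((1 - lam) * ((a1 + a2) / (a1 + a2)) + lam * ((b1 + b2) / (b1 + b2))) := by
            ring
      _ = F := by rw [div_self hA, div_self hB]; ring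
  -- 0 < p ≤ 1 : Minkowski
  · have hppos : 0 < p := lt_of_le_of_ne hp.1 (Ne.symm h)
    have hs1 : 1 ≤ 1 / p := by rw [le_div_iff₀ hppos]; linarith [hp.2]
    set s : ℝ := 1 / p with hsdef
    have hsne : s ≠ 0 := by positivity
    have hps : p * s = 1 := by rw [hsdef, mul_one_div, div_self h]
    set A1 : ℝ := (1 - lam) * a1 ^ p with hA1
    set A2 : ℝ := (1 - lam) * a2 ^ p with hA2
    set B1 : ℝ := lam * b1 ^ p with hB1
    set B2 : ℝ := lam * b2 ^ p with hB2
    have hA1n : 0 ≤ A1 := mul_nonneg hw (Real.rpow_nonneg ha1 _)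
    have hA2n : 0 ≤ A2 := mul_nonneg hw (Real.rpow_nonneg ha2 _)
    have hB1n : 0 ≤ B1 := mul_nonneg hl0.le (Real.rpow_nonneg hb1 _)
    have hB2n : 0 ≤ B2 := mul_nonneg hl0.le (Real.rpow_nonneg hb2 _)
    have mink := Real.Lp_add_le_of_nonneg (s := (Finset.univ : Finset (Fin 2)))
      (f := ![A1, A2]) (g := ![B1, B2]) (p := s) hs1
      (by intro i _; fin_cases i <;> simpa)
      (by intro i _; fin_cases i <;> simpa)
    simp only [Fin.sum_univ_two, Matrix.cons_val_zero, Matrix.cons_val_one, Matrix.head_cons]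
      at mink
    -- compute the right-hand side of mink
    have hAs : ∀ x : ℝ, 0 ≤ x → ((1 - lam) * x ^ p) ^ s = (1 - lam) ^ s * x := by
      intro x hx
      rw [Real.mul_rpow hw (Real.rpow_nonneg hx _), ← Real.rpow_mul hx, hps, Real.rpow_one]
    have hBs : ∀ x : ℝ, 0 ≤ x → (lam * x ^ p) ^ s = lam ^ s * x := by
      intro x hx
      rw [Real.mul_rpow hl0.le (Real.rpow_nonneg hx _), ← Real.rpow_mul hx, hps,
        Real.rpow_one]
    have hrhs1 : (A1 ^ s + A2 ^ s) ^ (1 / s) = (1 - lam) * (a1 + a2) ^ p := by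
      rw [hA1, hA2, hAs a1 ha1, hAs a2 ha2, ← mul_add,
        Real.mul_rpow (Real.rpow_nonneg hw s) (add_nonneg ha1 ha2),
        ← Real.rpow_mul hw, mul_one_div, div_self hsne, Real.rpow_one, hsdef,
        one_div_one_div]
    have hrhs2 : (B1 ^ s + B2 ^ s) ^ (1 / s) = lam * (b1 + b2) ^ p := by
      rw [hB1, hB2, hBs b1 hb1, hBs b2 hb2, ← mul_add,
        Real.mul_rpow (Real.rpow_nonneg hl0.le s) (add_nonneg hb1 hb2),
        ← Real.rpow_mul hl0.le, mul_one_div, div_self hsne, Real.rpow_one, hsdef,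
        one_div_one_div]
    rw [hrhs1, hrhs2] at mink
    have hX : 0 ≤ (A1 + B1) ^ s + (A2 + B2) ^ s := by
      have := add_nonneg hA1n hB1n
      have := add_nonneg hA2n hB2n
      positivity
    have final := Real.rpow_le_rpow (Real.rpow_nonneg hX _) mink
      (by positivity : (0:ℝ) ≤ s)
    rw [← Real.rpow_mul hX, one_div_mul_cancel hsne, Real.rpow_one] at final
    exact final
end combPlemmas

section mainlemmas
variable {n : ℕ}

lemma wulffIn_inner_le {p lam : ℝ} (hl : lam ∈ Set.Ioo (0:ℝ) 1)
    {E' : Submodule ℝ (Euc n)} {K L : Set (Euc n)}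
    (hKcp : IsCompact K) (hKne : K.Nonempty) (hK0 : (0:Euc n) ∈ K)
    (hLcp : IsCompact L) (hLne : L.Nonempty) (hL0 : (0:Euc n) ∈ L)
    {x : Euc n}
    (hx : x ∈ wulffIn E' (fun u => combP p lam (suppFn K u) (suppFn L u))) :
    ∀ v ∈ E', ⟪x, v⟫ ≤ combP p lam (suppFn K v) (suppFn L v) := by
  intro v hv
  by_cases hv0 : v = 0
  · subst hv0
    rw [inner_zero_right, suppFn_zero_vec hKne, suppFn_zero_vec hLne, combP_zero hl]
  · have ht : (0:ℝ) < ‖v‖ := norm_pos_iff.mpr hv0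
    set u : Euc n := ‖v‖⁻¹ • v with hudef
    have hu : ‖u‖ = 1 := norm_smul_inv_norm (𝕜 := ℝ) hv0
    have huE : u ∈ E' := E'.smul_mem _ hv
    have h1 := hx.2 u huE hu
    have hveq : v = ‖v‖ • u := by
      rw [hudef, smul_smul, mul_inv_cancel₀ ht.ne', one_smul]
    have hxu : ⟪x, u⟫ = ‖v‖⁻¹ * ⟪x, v⟫ := by rw [hudef, real_inner_smul_right]
    calc ⟪x, v⟫ = ‖v‖ * ⟪x, u⟫ := by
          rw [hxu, ← mul_assoc, mul_inv_cancel₀ ht.ne', one_mul]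
      _ ≤ ‖v‖ * combP p lam (suppFn K u) (suppFn L u) :=
          mul_le_mul_of_nonneg_left h1 ht.le
      _ = combP p lam (‖v‖ * suppFn K u) (‖v‖ * suppFn L u) :=
          (combP_smul hl ht.le (suppFn_nonneg hKcp hK0 u) (suppFn_nonneg hLcp hL0 u)).symm
      _ = combP p lam (suppFn K v) (suppFn L v) := by
          rw [← suppFn_smul hKcp hKne ht.le u, ← suppFn_smul hLcp hLne ht.le u, ← hveq]

end mainlemmas

/-- `L_p`-Minkowski combinations split across orthogonal Cartesian products:
`(1-λ)·(A+B) +_p λ·(C+D) = ((1-λ)·A +_p λ·C) + ((1-λ)·B +_p λ·D)`. -/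
theorem Lp_sum_cartesian_product (n : ℕ) (p lam : ℝ)
    (hp : p ∈ Set.Icc (0 : ℝ) 1) (hlam : lam ∈ Set.Ioo (0 : ℝ) 1)
    (E : Submodule ℝ (Euc n))
    (A C B D : Set (Euc n))
    (hAE : A ⊆ (E : Set (Euc n))) (hCE : C ⊆ (E : Set (Euc n)))
    (hBE : B ⊆ (Eᗮ : Set (Euc n))) (hDE : D ⊆ (Eᗮ : Set (Euc n)))
    (hAcp : IsCompact A) (hAcv : Convex ℝ A) (hAs : ∀ x ∈ A, -x ∈ A)
    (hAint : (interior (Subtype.val ⁻¹' A : Set E)).Nonempty)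
    (hCcp : IsCompact C) (hCcv : Convex ℝ C) (hCs : ∀ x ∈ C, -x ∈ C)
    (hCint : (interior (Subtype.val ⁻¹' C : Set E)).Nonempty)
    (hBcp : IsCompact B) (hBcv : Convex ℝ B) (hBs : ∀ x ∈ B, -x ∈ B)
    (hBint : (interior (Subtype.val ⁻¹' B : Set Eᗮ)).Nonempty)
    (hDcp : IsCompact D) (hDcv : Convex ℝ D) (hDs : ∀ x ∈ D, -x ∈ D)
    (hDint : (interior (Subtype.val ⁻¹' D : Set Eᗮ)).Nonempty) :
    wulff (fun u => combP p lam (suppFn (A + B) u) (suppFn (C + D) u))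
      = wulffIn E (fun u => combP p lam (suppFn A u) (suppFn C u))
        + wulffIn Eᗮ (fun u => combP p lam (suppFn B u) (suppFn D u)) := by
  -- nonemptiness and `0 ∈ ·`
  have hAne : A.Nonempty := by
    obtain ⟨z, hz⟩ := hAint
    have hz' : z ∈ (Subtype.val ⁻¹' A : Set _) := interior_subset hz
    exact ⟨(z : Euc n), hz'⟩
  have hCne : C.Nonempty := by
    obtain ⟨z, hz⟩ := hCint
    have hz' : z ∈ (Subtype.val ⁻¹' C : Set _) := interior_subset hz
    exact ⟨(z : Euc n), hz'⟩
  have hBne : B.Nonempty := by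
    obtain ⟨z, hz⟩ := hBint
    have hz' : z ∈ (Subtype.val ⁻¹' B : Set _) := interior_subset hz
    exact ⟨(z : Euc n), hz'⟩
  have hDne : D.Nonempty := by
    obtain ⟨z, hz⟩ := hDint
    have hz' : z ∈ (Subtype.val ⁻¹' D : Set _) := interior_subset hz
    exact ⟨(z : Euc n), hz'⟩
  have hA0 : (0:Euc n) ∈ A := zero_mem_of_symm hAcv hAs hAne
  have hC0 : (0:Euc n) ∈ C := zero_mem_of_symm hCcv hCs hCne
  have hB0 : (0:Euc n) ∈ B := zero_mem_of_symm hBcv hBs hBne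
  have hD0 : (0:Euc n) ∈ D := zero_mem_of_symm hDcv hDs hDne
  ext x
  constructor
  · -- forward inclusion
    intro hx
    simp only [wulff, Set.mem_setOf_eq] at hx
    set a : Euc n := ↑(E.orthogonalProjectionOnto x) with hadef
    have haE : a ∈ E := SetLike.coe_mem _
    have hbE : x - a ∈ Eᗮ := Submodule.sub_starProjection_mem_orthogonal x
    refine Set.mem_add.mpr ⟨a, ?_, x - a, ?_, by abel⟩
    · refine ⟨haE, ?_⟩
      intro u huE hu1
      have h0 : ⟪x - a, u⟫ = 0 := Submodule.inner_left_of_mem_orthogonal huE hbE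
      rw [inner_sub_left] at h0
      have hau : ⟪a, u⟫ = ⟪x, u⟫ := by linarith
      have hBu : suppFn B u = 0 :=
        suppFn_eq_zero hBne fun y hy =>
          Submodule.inner_right_of_mem_orthogonal huE (hBE hy)
      have hDu : suppFn D u = 0 :=
        suppFn_eq_zero hDne fun y hy =>
          Submodule.inner_right_of_mem_orthogonal huE (hDE hy)
      have := hx u hu1
      rwa [suppFn_add_eq hAcp hBcp hAne hBne, suppFn_add_eq hCcp hDcp hCne hDne,
        hBu, hDu, add_zero, add_zero, ← hau] at this
    · refine ⟨hbE, ?_⟩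
      intro u huE hu1
      have h0 : ⟪a, u⟫ = 0 := Submodule.inner_right_of_mem_orthogonal haE huE
      have hau : ⟪x - a, u⟫ = ⟪x, u⟫ := by rw [inner_sub_left, h0, sub_zero]
      have hAu : suppFn A u = 0 :=
        suppFn_eq_zero hAne fun y hy =>
          Submodule.inner_left_of_mem_orthogonal (hAE hy) huE
      have hCu : suppFn C u = 0 :=
        suppFn_eq_zero hCne fun y hy =>
          Submodule.inner_left_of_mem_orthogonal (hCE hy) huE
      have := hx u hu1
      rwa [suppFn_add_eq hAcp hBcp hAne hBne, suppFn_add_eq hCcp hDcp hCne hDne,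
        hAu, hCu, zero_add, zero_add, ← hau] at this
  · -- reverse inclusion
    intro hx
    obtain ⟨a, ha, b, hb, rfl⟩ := Set.mem_add.mp hx
    simp only [wulff, Set.mem_setOf_eq]
    intro u hu1
    set uE : Euc n := ↑(E.orthogonalProjectionOnto u) with huEdef
    have huEE : uE ∈ E := SetLike.coe_mem _
    have hup : u - uE ∈ Eᗮ := Submodule.sub_starProjection_mem_orthogonal u
    -- decompose the inner product
    have hau : ⟪a, u⟫ = ⟪a, uE⟫ := by
      have h0 : ⟪a, u - uE⟫ = 0 :=
        Submodule.inner_right_of_mem_orthogonal ha.1 hup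
      rw [inner_sub_right] at h0; linarith
    have hbu : ⟪b, u⟫ = ⟪b, u - uE⟫ := by
      have h0 : ⟪b, uE⟫ = 0 :=
        Submodule.inner_left_of_mem_orthogonal huEE hb.1
      rw [inner_sub_right, h0, sub_zero]
    -- support function identities
    have hA : suppFn A u = suppFn A uE :=
      suppFn_congr' fun y hy => by
        have h0 : ⟪u - uE, y⟫ = 0 :=
          Submodule.inner_left_of_mem_orthogonal (hAE hy) hup
        rw [inner_sub_left] at h0; linarith
    have hC : suppFn C u = suppFn C uE :=
      suppFn_congr' fun y hy => by
        have h0 : ⟪u - uE, y⟫ = 0 :=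
          Submodule.inner_left_of_mem_orthogonal (hCE hy) hup
        rw [inner_sub_left] at h0; linarith
    have hB : suppFn B u = suppFn B (u - uE) :=
      suppFn_congr' fun y hy => by
        have h0 : ⟪uE, y⟫ = 0 :=
          Submodule.inner_right_of_mem_orthogonal huEE (hBE hy)
        rw [inner_sub_left, h0, sub_zero]
    have hD : suppFn D u = suppFn D (u - uE) :=
      suppFn_congr' fun y hy => by
        have h0 : ⟪uE, y⟫ = 0 :=
          Submodule.inner_right_of_mem_orthogonal huEE (hDE hy)
        rw [inner_sub_left, h0, sub_zero]
    have key1 := wulffIn_inner_le hlam hAcp hAne hA0 hCcp hCne hC0 ha uE huEE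
    have key2 := wulffIn_inner_le hlam hBcp hBne hB0 hDcp hDne hD0 hb (u - uE) hup
    calc ⟪a + b, u⟫ = ⟪a, uE⟫ + ⟪b, u - uE⟫ := by rw [inner_add_left, hau, hbu]
      _ ≤ combP p lam (suppFn A uE) (suppFn C uE)
            + combP p lam (suppFn B (u - uE)) (suppFn D (u - uE)) := add_le_add key1 key2
      _ ≤ combP p lam (suppFn A uE + suppFn B (u - uE))
            (suppFn C uE + suppFn D (u - uE)) :=
          combP_superadd hp hlam (suppFn_nonneg hAcp hA0 _) (suppFn_nonneg hCcp hC0 _)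
            (suppFn_nonneg hBcp hB0 _) (suppFn_nonneg hDcp hD0 _)
      _ = combP p lam (suppFn (A + B) u) (suppFn (C + D) u) := by
          rw [suppFn_add_eq hAcp hBcp hAne hBne, suppFn_add_eq hCcp hDcp hCne hDne,
            hA, hC, hB, hD]


end
end

section
/- Let B := B₂ⁿ ∩ N^⊥ be the (n-1)-dimensional unit disc in the hyperplane N^⊥ for N ∈ S^{n-1}, and let j ∈ {1,…,n-2}. Then for every u ∈ S^{n-1}\{±N}, s_j(B,u)·h_B(u)^j = 1 - j/(n-1); that is, B satisfies the L_p-Christoffel-Minkowski equation h_B^{1-p}·s_j(B,·) = 1 - j/(n-1) with p = 1-j. -/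
open MeasureTheory Metric Matrix
open scoped RealInnerProductSpace Pointwise

noncomputable section

lemma suppFn_disc {n : ℕ} (N : Euc n) (hN : ‖N‖ = 1) (x : Euc n) :
    suppFn (closedBall (0 : Euc n) 1 ∩ (((ℝ ∙ N)ᗮ : Submodule ℝ (Euc n)) : Set (Euc n))) x
      = ‖x - ⟪N, x⟫ • N‖ := by
  set p : Euc n := x - ⟪N, x⟫ • N with hp
  have hNN : ⟪N, N⟫ = (1:ℝ) := by
    rw [real_inner_self_eq_norm_mul_norm, hN]; norm_num
  have hNp : ⟪N, p⟫ = 0 := by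
    rw [hp, inner_sub_right, real_inner_smul_right, hNN]; ring
  have hxp : ⟪x, p⟫ = ‖p‖ ^ 2 := by
    have hx : x = p + ⟪N, x⟫ • N := by simp [hp]
    calc ⟪x, p⟫ = ⟪p + ⟪N, x⟫ • N, p⟫ := by rw [← hx]
    _ = ⟪p, p⟫ + ⟪N, x⟫ * ⟪N, p⟫ := by rw [inner_add_left, real_inner_smul_left]
    _ = ‖p‖ ^ 2 := by rw [hNp, real_inner_self_eq_norm_sq]; ring
  have hpmem : p ∈ (ℝ ∙ N)ᗮ := Submodule.mem_orthogonal_singleton_iff_inner_right.2 hNp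
  apply IsGreatest.csSup_eq
  constructor
  · -- ‖p‖ is attained
    by_cases h0 : p = 0
    · refine ⟨0, ⟨⟨by simp, Submodule.zero_mem _⟩, by simp [h0]⟩⟩
    · have hnp : (0:ℝ) < ‖p‖ := norm_pos_iff.2 h0
      refine ⟨‖p‖⁻¹ • p, ⟨⟨?_, Submodule.smul_mem _ _ hpmem⟩, ?_⟩⟩
      · simp [mem_closedBall_zero_iff, norm_smul, abs_of_pos (inv_pos.2 hnp),
          inv_mul_cancel₀ hnp.ne']
      · show ⟪x, ‖p‖⁻¹ • p⟫ = ‖p‖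
        rw [real_inner_smul_right, hxp]
        field_simp [pow_two]
  · rintro z ⟨y, ⟨hy1, hy2⟩, rfl⟩
    have hyN : ⟪N, y⟫ = 0 := Submodule.mem_orthogonal_singleton_iff_inner_right.1 hy2
    have hx : x = p + ⟪N, x⟫ • N := by simp [hp]
    have : ⟪x, y⟫ = ⟪p, y⟫ := by
      rw [hx, inner_add_left, real_inner_smul_left, hyN]; ring
    show ⟪x, y⟫ ≤ ‖p‖
    rw [this]
    calc ⟪p, y⟫ ≤ ‖p‖ * ‖y‖ := real_inner_le_norm p y
    _ ≤ ‖p‖ * 1 := by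
        have := mem_closedBall_zero_iff.1 hy1
        exact mul_le_mul_of_nonneg_left this (norm_nonneg _)
    _ = ‖p‖ := mul_one _


section hess
variable {n : ℕ} (N : Euc n)

/-- orthogonal projection onto `N^⊥` as a CLM (for unit `N`). -/
def projN : Euc n →L[ℝ] Euc n :=
  ContinuousLinearMap.id ℝ (Euc n) - (innerSL ℝ N).smulRight N

lemma projN_apply (x : Euc n) : projN N x = x - ⟪N, x⟫ • N := rfl

variable (hN : ‖N‖ = 1)
include hN

lemma inner_NN : ⟪N, N⟫ = (1:ℝ) := by
  rw [real_inner_self_eq_norm_mul_norm, hN]; norm_num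

lemma inner_N_projN (x : Euc n) : ⟪N, projN N x⟫ = 0 := by
  rw [projN_apply, inner_sub_right, real_inner_smul_right, inner_NN N hN]; ring

lemma inner_projN_N (x : Euc n) : ⟪projN N x, N⟫ = 0 := by
  rw [real_inner_comm]; exact inner_N_projN N hN x

lemma inner_projN_projN (x y : Euc n) : ⟪projN N x, projN N y⟫ = ⟪x, projN N y⟫ := by
  rw [projN_apply N x, inner_sub_left, real_inner_smul_left, inner_N_projN N hN]; ring

/-- First derivative of `x ↦ ‖P x‖` where it is nonzero. -/
lemma hasFDeriv_norm_projN (x : Euc n) (hx : projN N x ≠ 0) :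
    HasFDerivAt (fun y => ‖projN N y‖)
      (‖projN N x‖⁻¹ • ((innerSL ℝ (projN N x)).comp (projN N))) x := by
  have hg : HasFDerivAt (fun y => ‖projN N y‖ ^ 2)
      ((2:ℕ) • (innerSL ℝ (projN N x)).comp (projN N)) x :=
    (projN N).hasFDerivAt.norm_sq
  have hne : ‖projN N x‖ ^ 2 ≠ 0 := pow_ne_zero _ (norm_ne_zero_iff.2 hx)
  have h1 := hg.sqrt hne
  have heq : (fun y => Real.sqrt (‖projN N y‖ ^ 2)) = fun y => ‖projN N y‖ := by
    funext y; exact Real.sqrt_sq (norm_nonneg _)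
  rw [heq] at h1
  refine h1.congr_fderiv ?_
  rw [Real.sqrt_sq (norm_nonneg _)]
  ext v
  have : (0:ℝ) < ‖projN N x‖ := norm_pos_iff.2 hx
  simp only [ContinuousLinearMap.smul_apply, smul_eq_mul]
  field_simp
  ring

end hess

section hess2
variable {n : ℕ} (N : Euc n) (hN : ‖N‖ = 1)
include hN

lemma fderiv_norm_projN_eventually (u : Euc n) (hu : projN N u ≠ 0) (k : Fin n) :
    (fun x => fderiv ℝ (fun y => ‖projN N y‖) x (EuclideanSpace.single k 1))
      =ᶠ[nhds u]
      fun x => ‖projN N x‖⁻¹ * ⟪projN N x, projN N (EuclideanSpace.single k 1)⟫ := by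
  have hopen : IsOpen {x : Euc n | projN N x ≠ 0} := by
    have h2 : {x : Euc n | projN N x ≠ 0} = (projN N) ⁻¹' {(0:Euc n)}ᶜ := rfl
    rw [h2]
    exact (isOpen_compl_singleton).preimage (projN N).continuous
  filter_upwards [hopen.mem_nhds hu] with x hx
  rw [(hasFDeriv_norm_projN N hN x hx).fderiv]
  simp

lemma inner_proj_single (u : Euc n) (i : Fin n) :
    ⟪projN N u, projN N (EuclideanSpace.single i 1)⟫ = (projN N u) i := by
  rw [real_inner_comm, inner_projN_projN N hN]
  simp [EuclideanSpace.inner_single_left]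

lemma inner_proj_single_single (i k : Fin n) :
    ⟪projN N (EuclideanSpace.single i 1), projN N (EuclideanSpace.single k 1)⟫
      = (if i = k then 1 else 0) - N i * N k := by
  rw [inner_projN_projN N hN, projN_apply N (EuclideanSpace.single k 1), inner_sub_right,
    real_inner_smul_right]
  simp only [EuclideanSpace.inner_single_left, EuclideanSpace.inner_single_right,
    EuclideanSpace.single_apply, _root_.map_one, one_mul, conj_trivial]
  have h2 : (if k = i then (1:ℝ) else 0) = (if i = k then 1 else 0) := by simp [eq_comm]
  rw [h2]; ring

lemma hessMat_norm_projN (u : Euc n) (hu : projN N u ≠ 0) :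
    hessMat (fun y => ‖projN N y‖) u = Matrix.of (fun i k =>
      ‖projN N u‖⁻¹ * ((if i = k then 1 else 0) - N i * N k)
        - (‖projN N u‖⁻¹)^3 * ((projN N u) i * (projN N u) k)) := by
  have h0 : (0:ℝ) < ‖projN N u‖ := norm_pos_iff.2 hu
  ext i k
  rw [hessMat, Matrix.of_apply, Matrix.of_apply,
    Filter.EventuallyEq.fderiv_eq (fderiv_norm_projN_eventually N hN u hu k)]
  set c : Euc n := projN N (EuclideanSpace.single k 1) with hc
  have hA : HasFDerivAt (fun x : Euc n => ⟪projN N x, c⟫)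
      ((fderivInnerCLM ℝ (projN N u, c)).comp ((projN N).prod 0)) u :=
    HasFDerivAt.inner ℝ (projN N).hasFDerivAt (hasFDerivAt_const c u)
  have hB : HasFDerivAt (fun x : Euc n => ‖projN N x‖⁻¹)
      ((-(‖projN N u‖^2)⁻¹) • (‖projN N u‖⁻¹ • ((innerSL ℝ (projN N u)).comp (projN N)))) u :=
    (hasDerivAt_inv h0.ne').comp_hasFDerivAt u (hasFDeriv_norm_projN N hN u hu)
  have hmul := hB.mul hA
  rw [HasFDerivAt.fderiv (f := fun x => ‖projN N x‖⁻¹ * ⟪projN N x, c⟫) hmul]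
  simp only [ContinuousLinearMap.add_apply, ContinuousLinearMap.smul_apply,
    ContinuousLinearMap.comp_apply, ContinuousLinearMap.prod_apply, fderivInnerCLM_apply,
    ContinuousLinearMap.zero_apply, innerSL_apply_apply, smul_eq_mul, inner_zero_right]
  rw [hc, inner_proj_single_single N hN, inner_proj_single N hN, inner_proj_single N hN]
  field_simp
  ring
end hess2


open Polynomial

lemma charpoly_conj {m : Type*} [Fintype m] [DecidableEq m] (U V M : Matrix m m ℝ)
    (hUV : U * V = 1) : (U * M * V).charpoly = M.charpoly := by
  unfold Matrix.charpoly
  have hscal : ∀ A : Matrix m m ℝ[X], A * Matrix.scalar m (X : ℝ[X])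
      = Matrix.scalar m (X : ℝ[X]) * A := fun A =>
    (Matrix.scalar_commute (X : ℝ[X]) (fun r' => Commute.all _ _) A).symm
  have hmat : charmatrix (U * M * V) = U.map C * charmatrix M * V.map C := by
    unfold charmatrix
    rw [Matrix.mul_sub, Matrix.sub_mul]
    congr 1
    · rw [hscal (U.map C), Matrix.mul_assoc, ← Matrix.map_mul]
      rw [hUV]
      simp
    · simp only [RingHom.mapMatrix_apply]
      rw [Matrix.map_mul, Matrix.map_mul, Matrix.mul_assoc]
  rw [hmat, Matrix.det_mul, Matrix.det_mul]
  have hdet : ((U.map (C : ℝ → ℝ[X])).det) * ((V.map C).det) = 1 := by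
    rw [← Matrix.det_mul, ← Matrix.map_mul, hUV]
    simp
  calc ((U.map (C : ℝ → ℝ[X])).det) * (charmatrix M).det * ((V.map C).det)
      = (charmatrix M).det * (((U.map C).det) * ((V.map C).det)) := by ring
    _ = (charmatrix M).det := by rw [hdet, mul_one]

lemma charpoly_diagonal {m : Type*} [Fintype m] [DecidableEq m] (d : m → ℝ) :
    (Matrix.diagonal d).charpoly = ∏ i, (X - C (d i)) := by
  unfold Matrix.charpoly
  have : charmatrix (Matrix.diagonal d) = Matrix.diagonal (fun i => X - C (d i)) := by
    ext i k
    by_cases h : i = k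
    · subst h; simp
    · simp [h, Matrix.diagonal_apply_ne _ h]
  rw [this, Matrix.det_diagonal]

lemma prod_X_sub_C_fin (n : ℕ) (hn : 3 ≤ n) (c : ℝ) :
    (∏ i : Fin n, (X - C (if (i : ℕ) < 2 then 0 else c)))
      = X ^ 2 * (X + C (-c)) ^ (n - 2) := by
  haveI : NeZero n := ⟨by omega⟩
  have h0 : ((0 : Fin n) : ℕ) = 0 := rfl
  have hone : ((1 : Fin n) : ℕ) = 1 := by
    rw [Fin.val_one']; exact Nat.mod_eq_of_lt (by omega)
  have h1 : Finset.univ.filter (fun i : Fin n => (i : ℕ) < 2) = {0, 1} := by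
    ext i
    simp only [Finset.mem_filter, Finset.mem_univ, true_and, Finset.mem_insert,
      Finset.mem_singleton]
    constructor
    · intro h
      have h' : (i:ℕ) = 0 ∨ (i:ℕ) = 1 := by omega
      rcases h' with h' | h'
      · left; exact Fin.ext (by rw [h', h0])
      · right; exact Fin.ext (by rw [h', hone])
    · rintro (rfl | rfl)
      · rw [h0]; omega
      · rw [hone]; omega
  have hcard1 : (Finset.univ.filter (fun i : Fin n => (i : ℕ) < 2)).card = 2 := by
    rw [h1, Finset.card_insert_of_notMem, Finset.card_singleton]
    simp only [Finset.mem_singleton]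
    intro h
    have := congrArg Fin.val h
    rw [h0, hone] at this
    omega
  have hcard2 : (Finset.univ.filter (fun i : Fin n => ¬ (i : ℕ) < 2)).card = n - 2 := by
    have h := Finset.card_filter_add_card_filter_not
      (s := (Finset.univ : Finset (Fin n))) (p := fun i : Fin n => (i : ℕ) < 2)
    rw [hcard1] at h
    simp only [Finset.card_univ, Fintype.card_fin] at h
    omega
  rw [← Finset.prod_filter_mul_prod_filter_not Finset.univ (fun i : Fin n => (i : ℕ) < 2)]
  have hp1 : (∏ i ∈ Finset.univ.filter (fun i : Fin n => (i : ℕ) < 2),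
      (X - C (if (i : ℕ) < 2 then 0 else c))) = X ^ 2 := by
    rw [Finset.prod_congr rfl (fun i hi => ?_), Finset.prod_const, hcard1]
    simp only [Finset.mem_filter] at hi
    rw [if_pos hi.2, map_zero, sub_zero]
  have hp2 : (∏ i ∈ Finset.univ.filter (fun i : Fin n => ¬ (i : ℕ) < 2),
      (X - C (if (i : ℕ) < 2 then 0 else c))) = (X + C (-c)) ^ (n - 2) := by
    rw [Finset.prod_congr rfl (fun i hi => ?_), Finset.prod_const, hcard2]
    simp only [Finset.mem_filter] at hi
    rw [if_neg hi.2, map_neg, sub_eq_add_neg]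
  rw [hp1, hp2]

lemma coeff_charpoly_target (n j : ℕ) (hn : 3 ≤ n) (hj : j ≤ n - 2) (c : ℝ) :
    (X ^ 2 * (X + C (-c)) ^ (n - 2)).coeff (n - j) = (-c) ^ j * ((n-2).choose j) := by
  have h1 : n - j = (n - 2 - j) + 2 := by omega
  rw [h1, Polynomial.coeff_X_pow_mul, Polynomial.coeff_X_add_C_pow]
  have h2 : (n - 2) - (n - 2 - j) = j := by omega
  have h3 : (n-2).choose (n - 2 - j) = (n-2).choose j := by
    rw [← Nat.choose_symm hj]
  rw [h2, h3]


lemma real_inner_eq_sum {n : ℕ} (x y : Euc n) : ⟪x, y⟫ = ∑ m, x m * y m := by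
  simp [PiLp.inner_apply, RCLike.inner_apply, conj_trivial]
  exact Finset.sum_congr rfl fun _ _ => mul_comm _ _

lemma charpoly_M0 (n : ℕ) (hn : 3 ≤ n) (N p : Euc n) (hN : ‖N‖ = 1) (hp : p ≠ 0)
    (hNp : ⟪N, p⟫ = 0) :
    (Matrix.of fun i k : Fin n => ‖p‖⁻¹ * ((if i = k then 1 else 0) - N i * N k)
        - (‖p‖⁻¹)^3 * (p i * p k)).charpoly
      = X ^ 2 * (X + C (-‖p‖⁻¹)) ^ (n - 2) := by
  haveI : NeZero n := ⟨by omega⟩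
  set h₀ : ℝ := ‖p‖ with hh₀
  have h₀pos : 0 < h₀ := norm_pos_iff.2 hp
  set q : Euc n := h₀⁻¹ • p with hq
  have hqnorm : ‖q‖ = 1 := by
    rw [hq, norm_smul, norm_inv, norm_norm, ← hh₀, inv_mul_cancel₀ h₀pos.ne']
  have h01 : (0 : Fin n) ≠ 1 := by
    intro h
    have := congrArg Fin.val h
    rw [Fin.val_zero, Fin.val_one'] at this
    rw [Nat.mod_eq_of_lt (by omega)] at this
    omega
  have hNq : ⟪N, q⟫ = 0 := by rw [hq, real_inner_smul_right, hNp, mul_zero]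
  -- orthonormal family indexed by {0, 1}
  set v : Fin n → Euc n := fun i => if i = 0 then N else if i = 1 then q else 0 with hv
  have horth : Orthonormal ℝ (({0, 1} : Set (Fin n)).restrict v) := by
    constructor
    · rintro ⟨i, hi⟩
      rcases hi with rfl | hi
      · show ‖v 0‖ = 1
        simpa [hv] using hN
      · rw [Set.mem_singleton_iff] at hi
        subst hi
        show ‖v 1‖ = 1
        simpa [hv, h01.symm] using hqnorm
    · rintro ⟨i, hi⟩ ⟨k, hk⟩ hik
      have hik' : i ≠ k := fun h => hik (by simp [h])
      rcases hi with rfl | hi <;> rcases hk with rfl | hk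
      · exact absurd rfl hik'
      · rw [Set.mem_singleton_iff] at hk; subst hk
        show ⟪v 0, v 1⟫ = 0
        simpa [hv, h01.symm] using hNq
      · rw [Set.mem_singleton_iff] at hi; subst hi
        rw [real_inner_comm]
        show ⟪v 0, v 1⟫ = 0
        simpa [hv, h01.symm] using hNq
      · rw [Set.mem_singleton_iff] at hi hk; subst hi; subst hk
        exact absurd rfl hik'
  obtain ⟨b, hb⟩ := horth.exists_orthonormalBasis_extension_of_card_eq (by simp)
  have hb0 : b 0 = N := by simpa [hv] using hb 0 (by simp)
  have hb1 : b 1 = q := by simpa [hv, h01.symm] using hb 1 (by simp)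
  have hbip : ∀ k l : Fin n, ⟪b k, b l⟫ = if k = l then 1 else 0 :=
    orthonormal_iff_ite.1 b.orthonormal
  set U : Matrix (Fin n) (Fin n) ℝ := Matrix.of (fun i k => b k i) with hU
  have hUtU : Uᵀ * U = 1 := by
    ext k l
    rw [Matrix.mul_apply, Matrix.one_apply]
    have : ∑ i, Uᵀ k i * U i l = ⟪b k, b l⟫ := by
      rw [real_inner_eq_sum]
      exact Finset.sum_congr rfl fun i _ => rfl
    rw [this, hbip]
  have hUUt : U * Uᵀ = 1 := mul_eq_one_comm.mp hUtU
  set d : Fin n → ℝ := fun k => if (k : ℕ) < 2 then 0 else h₀⁻¹ with hd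
  have hval2 : ∀ k : Fin n, k ≠ 0 → k ≠ 1 → ¬ ((k : ℕ) < 2) := by
    intro k hk0 hk1 hlt
    have h' : (k : ℕ) = 0 ∨ (k : ℕ) = 1 := by omega
    rcases h' with h' | h'
    · exact hk0 (Fin.ext (by rw [h', Fin.val_zero]))
    · exact hk1 (Fin.ext (by rw [h', Fin.val_one', Nat.mod_eq_of_lt (by omega)]))
  have hMU : (Matrix.of fun i k : Fin n => h₀⁻¹ * ((if i = k then 1 else 0) - N i * N k)
      - (h₀⁻¹)^3 * (p i * p k)) * U = U * Matrix.diagonal d := by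
    ext i k
    rw [Matrix.mul_apply, Matrix.mul_diagonal]
    have hNw : ⟪N, b k⟫ = if k = 0 then 1 else 0 := by
      by_cases hk : k = 0
      · subst hk
        rw [hb0, if_pos rfl, real_inner_self_eq_norm_mul_norm, hN]; norm_num
      · rw [if_neg hk, ← hb0, hbip]
        rw [if_neg (fun h => hk h.symm)]
      -- done
    have hpw : ⟪p, b k⟫ = if k = 1 then h₀ else 0 := by
      have hpq : p = h₀ • q := by
        rw [hq, smul_smul, mul_inv_cancel₀ h₀pos.ne', one_smul]
      by_cases hk : k = 1
      · subst hk
        rw [hb1, if_pos rfl, hpq, real_inner_smul_left, real_inner_self_eq_norm_mul_norm, hqnorm]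
        norm_num
      · rw [if_neg hk, hpq, real_inner_smul_left, ← hb1, hbip,
          if_neg (fun h => hk h.symm), mul_zero]
    have hNw' : ∑ m, N m * b k m = if k = 0 then 1 else 0 := by
      rw [← real_inner_eq_sum, hNw]
    have hpw' : ∑ m, p m * b k m = if k = 1 then h₀ else 0 := by
      rw [← real_inner_eq_sum, hpw]
    have hsum : ∑ m, (Matrix.of fun i k : Fin n => h₀⁻¹ * ((if i = k then 1 else 0) - N i * N k)
        - (h₀⁻¹)^3 * (p i * p k)) i m * U m k
        = h₀⁻¹ * b k i - h₀⁻¹ * N i * (∑ m, N m * b k m)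
          - (h₀⁻¹)^3 * p i * (∑ m, p m * b k m) := by
      have hterm : ∀ m, (Matrix.of fun i k : Fin n => h₀⁻¹ * ((if i = k then 1 else 0) - N i * N k)
          - (h₀⁻¹)^3 * (p i * p k)) i m * U m k
          = h₀⁻¹ * (if i = m then b k m else 0) - h₀⁻¹ * N i * (N m * b k m)
            - (h₀⁻¹)^3 * p i * (p m * b k m) := by
        intro m
        rw [Matrix.of_apply, hU, Matrix.of_apply]
        by_cases h : i = m <;> simp [h] <;> ring
      rw [Finset.sum_congr rfl fun m _ => hterm m]
      rw [Finset.sum_sub_distrib, Finset.sum_sub_distrib, ← Finset.mul_sum, ← Finset.mul_sum,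
        ← Finset.mul_sum, Finset.sum_ite_eq]
      simp
    rw [hsum, hNw', hpw']
    by_cases hk0 : k = 0
    · subst hk0
      rw [if_pos rfl, if_neg h01, hd]
      simp only [Fin.val_zero, if_pos (by omega : (0:ℕ) < 2)]
      rw [hU, Matrix.of_apply, hb0]
      ring_nf; simp
    · by_cases hk1 : k = 1
      · subst hk1
        rw [if_neg (Ne.symm h01), if_pos rfl, hd]
        simp only [Fin.val_one', Nat.mod_eq_of_lt (by omega : 1 < n),
          if_pos (by omega : (1:ℕ) < 2)]
        rw [hU, Matrix.of_apply, hb1, hq]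
        have : (h₀⁻¹ • p) i = h₀⁻¹ * p i := rfl
        rw [this]
        field_simp
        ring
      · rw [if_neg hk0, if_neg hk1, hd]
        simp only [if_neg (hval2 k hk0 hk1)]
        rw [hU, Matrix.of_apply]
        ring
  have hM0 : (Matrix.of fun i k : Fin n => h₀⁻¹ * ((if i = k then 1 else 0) - N i * N k)
      - (h₀⁻¹)^3 * (p i * p k)) = U * Matrix.diagonal d * Uᵀ := by
    calc (Matrix.of fun i k : Fin n => h₀⁻¹ * ((if i = k then 1 else 0) - N i * N k)
        - (h₀⁻¹)^3 * (p i * p k))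
        = (Matrix.of fun i k : Fin n => h₀⁻¹ * ((if i = k then 1 else 0) - N i * N k)
          - (h₀⁻¹)^3 * (p i * p k)) * (U * Uᵀ) := by rw [hUUt, Matrix.mul_one]
      _ = ((Matrix.of fun i k : Fin n => h₀⁻¹ * ((if i = k then 1 else 0) - N i * N k)
          - (h₀⁻¹)^3 * (p i * p k)) * U) * Uᵀ := by rw [Matrix.mul_assoc]
      _ = U * Matrix.diagonal d * Uᵀ := by rw [hMU]
  rw [hM0, charpoly_conj U Uᵀ _ hUUt, _root_.charpoly_diagonal]
  rw [← prod_X_sub_C_fin n hn h₀⁻¹]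



/-- The lower-dimensional unit disc `B = B₂ⁿ ∩ N^⊥` satisfies
`s_j(B,u) h_B(u)^j = 1 - j/(n-1)` for every unit `u ≠ ±N`; that is, `B` solves the
`L_p`-Christoffel-Minkowski equation with `p = 1 - j` and constant right-hand side. -/
theorem disc_degenerate_example (n j : ℕ) (hn : 3 ≤ n) (hj1 : 1 ≤ j) (hjn : j ≤ n - 2)
    (N : Euc n) (hN : ‖N‖ = 1) :
    ∀ u : Euc n, ‖u‖ = 1 → u ≠ N → u ≠ -N →
      sjFun n j
          (suppFn (closedBall (0 : Euc n) 1 ∩ (((ℝ ∙ N)ᗮ : Submodule ℝ (Euc n)) : Set (Euc n)))) u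
        * suppFn (closedBall (0 : Euc n) 1 ∩ (((ℝ ∙ N)ᗮ : Submodule ℝ (Euc n)) : Set (Euc n))) u ^ j
        = 1 - (j : ℝ) / ((n : ℝ) - 1) := by
  intro u hu hu1 hu2
  have hfun : suppFn (closedBall (0 : Euc n) 1 ∩ (((ℝ ∙ N)ᗮ : Submodule ℝ (Euc n)) : Set (Euc n)))
      = fun x => ‖projN N x‖ := by
    funext x
    rw [suppFn_disc N hN x, ← projN_apply]
  have hp : projN N u ≠ 0 := by
    intro h
    have hu' : u = ⟪N, u⟫ • N := by
      have h2 : u - ⟪N, u⟫ • N = 0 := by rw [← projN_apply N u]; exact h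
      exact sub_eq_zero.mp h2
    have hcabs : |⟪N, u⟫| = 1 := by
      have h3 : ‖u‖ = |⟪N, u⟫| * ‖N‖ := by
        conv_lhs => rw [hu']
        rw [norm_smul, Real.norm_eq_abs]
      rw [hu, hN, mul_one] at h3
      exact h3.symm
    rcases (abs_eq (by norm_num : (0:ℝ) ≤ 1)).1 hcabs with hc | hc
    · exact hu1 (by rw [hu', hc, one_smul])
    · exact hu2 (by rw [hu', hc, neg_smul, one_smul])
  rw [hfun]
  simp only [sjFun]
  rw [hessMat_norm_projN N hN u hp,
    charpoly_M0 n hn N (projN N u) hN hp (inner_N_projN N hN u),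
    coeff_charpoly_target n j hn hjn ‖projN N u‖⁻¹]
  have h₀pos : (0:ℝ) < ‖projN N u‖ := norm_pos_iff.2 hp
  have hch : ((-1:ℝ))^j * (-(‖projN N u‖⁻¹))^j * ‖projN N u‖^j = 1 := by
    rw [← mul_pow, ← mul_pow]
    have h4 : (-1:ℝ) * -(‖projN N u‖⁻¹) * ‖projN N u‖ = 1 := by
      field_simp
    rw [h4, one_pow]
  have hc1 : (((n-1).choose j : ℕ) : ℝ) ≠ 0 := by
    exact_mod_cast (Nat.choose_pos (by omega : j ≤ n - 1)).ne'
  have hn1 : ((n:ℝ) - 1) ≠ 0 := by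
    have h5 : (3:ℝ) ≤ (n:ℝ) := by exact_mod_cast hn
    intro h; linarith
  have hnat : (n-1) * ((n-2).choose j) = ((n-1).choose j) * ((n-1) - j) := by
    have hm : n - 1 = (n-2) + 1 := by omega
    rw [hm, Nat.add_one_mul_choose_eq, Nat.choose_succ_right_eq]
  have hkey : ((n:ℝ) - 1) * (((n-2).choose j : ℕ) : ℝ)
      = (((n-1).choose j : ℕ) : ℝ) * (((n:ℝ) - 1) - (j:ℝ)) := by
    have h6 := congrArg (Nat.cast : ℕ → ℝ) hnat
    push_cast [Nat.cast_sub (by omega : 1 ≤ n), Nat.cast_sub (by omega : 2 ≤ n),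
      Nat.cast_sub (by omega : j ≤ n - 1)] at h6
    linear_combination h6
  have hfinal : ((((n-1).choose j : ℕ) : ℝ))⁻¹ * (((n-2).choose j : ℕ) : ℝ)
      = 1 - (j:ℝ) / ((n:ℝ) - 1) := by
    field_simp
    linear_combination hkey
  calc ((((n-1).choose j : ℕ) : ℝ))⁻¹
        * ((-1:ℝ)^j * ((-(‖projN N u‖⁻¹))^j * (((n-2).choose j : ℕ) : ℝ)))
        * ‖projN N u‖^j
      = ((-1:ℝ)^j * (-(‖projN N u‖⁻¹))^j * ‖projN N u‖^j)
          * (((((n-1).choose j : ℕ) : ℝ))⁻¹ * (((n-2).choose j : ℕ) : ℝ)) := by ring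
    _ = ((((n-1).choose j : ℕ) : ℝ))⁻¹ * (((n-2).choose j : ℕ) : ℝ) := by rw [hch, one_mul]
    _ = 1 - (j:ℝ) / ((n:ℝ) - 1) := hfinal


end
end
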